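/- arXiv:2508.06369 — 11 statements merged into one kernel-verified Lean document; each statement's English description precedes it below -/
import Mathlib

section
/- Let α, τ ∈ ℝ and let u, v : ℝ × ℝ → ℝ be arbitrary smooth functions (not assumed to solve any equation). Then at every point (x,t) ∈ ℝ² the following pointwise identity holds: v·(∂ₜu + u∂ₓu + ∂ₓv + α∂ₓₓu) + u·(∂ₜv + ∂ₓ(uv) + τ∂ₓₓₓu − α∂ₓₓv) = ∂ₜ(uv) + ∂ₓ(u²v − αu·∂ₓv + α·(∂ₓu)·v + ½v² + τu·∂ₓₓu − ½τ·(∂ₓu)²). -/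
/-- Partial derivative with respect to the first (space) variable. -/
noncomputable def px (f : ℝ → ℝ → ℝ) : ℝ → ℝ → ℝ := fun x t => deriv (fun y => f y t) x

/-- Partial derivative with respect to the second (time) variable. -/
noncomputable def pt (f : ℝ → ℝ → ℝ) : ℝ → ℝ → ℝ := fun x t => deriv (fun s => f x s) t

/-- Smoothness of a function of two real variables. -/
def Smooth2 (f : ℝ → ℝ → ℝ) : Prop := ContDiff ℝ (⊤ : ℕ∞) (Function.uncurry f)

/-- Residual of the first Whitham–Broer–Kaup equation:
`u_t + u u_x + v_x + α u_xx`. -/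
noncomputable def wbk1 (α : ℝ) (u v : ℝ → ℝ → ℝ) : ℝ → ℝ → ℝ :=
  fun x t => pt u x t + u x t * px u x t + px v x t + α * px (px u) x t

/-- Residual of the second Whitham–Broer–Kaup equation:
`v_t + (u v)_x + τ u_xxx − α v_xx`. -/
noncomputable def wbk2 (α τ : ℝ) (u v : ℝ → ℝ → ℝ) : ℝ → ℝ → ℝ :=
  fun x t => pt v x t + px (fun a b => u a b * v a b) x t
    + τ * px (px (px u)) x t - α * px (px v) x t

/-- The Whitham–Broer–Kaup system holds at every point of `ℝ²`. -/
def WBK (α τ : ℝ) (u v : ℝ → ℝ → ℝ) : Prop :=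
  ∀ x t : ℝ, wbk1 α u v x t = 0 ∧ wbk2 α τ u v x t = 0

lemma Smooth2.diffx {f : ℝ → ℝ → ℝ} (hf : Smooth2 f) (x t : ℝ) :
    DifferentiableAt ℝ (fun y => f y t) x := by
  exact ((hf.differentiable (by simp)) (x, t)).comp x
    ((differentiableAt_id (𝕜 := ℝ) (x := x)).prodMk (differentiableAt_const t))

lemma Smooth2.difft {f : ℝ → ℝ → ℝ} (hf : Smooth2 f) (x t : ℝ) :
    DifferentiableAt ℝ (fun s => f x s) t :=
  ((hf.differentiable (by simp)) (x, t)).comp t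
    ((differentiableAt_const x).prodMk differentiableAt_id)

lemma Smooth2.px' {f : ℝ → ℝ → ℝ} (hf : Smooth2 f) : Smooth2 (px f) := by
  have key : Function.uncurry (px f) =
      fun p : ℝ × ℝ => fderiv ℝ (Function.uncurry f) p ((1 : ℝ), (0 : ℝ)) := by
    funext p
    have h1 : HasDerivAt (fun y : ℝ => (y, p.2)) ((1 : ℝ), (0 : ℝ)) p.1 :=
      (hasDerivAt_id p.1).prodMk (hasDerivAt_const p.1 p.2)
    exact (((hf.differentiable (by simp) (p.1, p.2)).hasFDerivAt).comp_hasDerivAt p.1 h1).deriv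
  rw [Smooth2, key]
  exact (hf.fderiv_right (by simp)).clm_apply contDiff_const

lemma Smooth2.hasDx {f : ℝ → ℝ → ℝ} (hf : Smooth2 f) (x t : ℝ) :
    HasDerivAt (fun y => f y t) (px f x t) x :=
  (hf.diffx x t).hasDerivAt

lemma Smooth2.hasDt {f : ℝ → ℝ → ℝ} (hf : Smooth2 f) (x t : ℝ) :
    HasDerivAt (fun s => f x s) (pt f x t) t :=
  (hf.difft x t).hasDerivAt

/-- Divergence identity for the multiplier pair `(Λ¹, Λ²) = (v, u)`
underlying the third conservation law of Theorem 7. -/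
theorem wbk_multiplier_identity_uv (α τ : ℝ) (u v : ℝ → ℝ → ℝ)
    (hu : Smooth2 u) (hv : Smooth2 v) (x t : ℝ) :
    v x t * wbk1 α u v x t + u x t * wbk2 α τ u v x t =
      pt (fun a b => u a b * v a b) x t
      + px (fun a b => (u a b) ^ 2 * v a b - α * u a b * px v a b
          + α * px u a b * v a b + (1 / 2) * (v a b) ^ 2
          + τ * u a b * px (px u) a b - (1 / 2) * τ * (px u a b) ^ 2) x t := by
  have Hu := hu.hasDx x t
  have Hv := hv.hasDx x t
  have Hux := hu.px'.hasDx x t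
  have Huxx := hu.px'.px'.hasDx x t
  have Hvx := hv.px'.hasDx x t
  have Hut := hu.hasDt x t
  have Hvt := hv.hasDt x t
  -- time derivative of u*v
  have h1 : pt (fun a b => u a b * v a b) x t
      = pt u x t * v x t + u x t * pt v x t := (Hut.mul Hvt).deriv
  -- space derivative of u*v
  have h2 : px (fun a b => u a b * v a b) x t
      = px u x t * v x t + u x t * px v x t := (Hu.mul Hv).deriv
  -- space derivative of the flux
  have H :=
    ((((((Hu.pow 2).mul Hv).sub ((Hu.const_mul α).mul Hvx)).add
        ((Hux.const_mul α).mul Hv)).add ((Hv.pow 2).const_mul (1/2))).add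
        ((Hu.const_mul τ).mul Huxx)).sub ((Hux.pow 2).const_mul (1/2 * τ))
  have h3 : px (fun a b => (u a b) ^ 2 * v a b - α * u a b * px v a b
          + α * px u a b * v a b + (1 / 2) * (v a b) ^ 2
          + τ * u a b * px (px u) a b - (1 / 2) * τ * (px u a b) ^ 2) x t
      = ((((((↑2 * u x t ^ (2-1) * px u x t) * v x t + u x t ^ 2 * px v x t)
          - ((α * px u x t) * px v x t + (α * u x t) * px (px v) x t))
          + ((α * px (px u) x t) * v x t + (α * px u x t) * px v x t))
          + 1/2 * (↑2 * v x t ^ (2-1) * px v x t))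
          + ((τ * px u x t) * px (px u) x t + (τ * u x t) * px (px (px u)) x t))
          - 1/2 * τ * (↑2 * px u x t ^ (2-1) * px (px u) x t) := H.deriv
  simp only [wbk1, wbk2]
  rw [h1, h2, h3]
  push_cast
  ring
end

section
/- Let α, τ ∈ ℝ and let u, v : ℝ × ℝ → ℝ be arbitrary smooth functions (not assumed to solve any equation). Then at every point (x,t) ∈ ℝ² the following pointwise identity holds: (−t·v)·(∂ₜu + u∂ₓu + ∂ₓv + α∂ₓₓu) + (x − t·u)·(∂ₜv + ∂ₓ(uv) + τ∂ₓₓₓu − α∂ₓₓv) = ∂ₜ(−t·uv + x·v) + ∂ₓ(−t·u²v + αt·u·∂ₓv − αt·(∂ₓu)·v − ½t·v² + x·uv − τt·u·∂ₓₓu + ½τt·(∂ₓu)² − τ·∂ₓu + τx·∂ₓₓu + αv − αx·∂ₓv). -/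
section Helpers

variable {f : ℝ → ℝ → ℝ}

lemma Smooth2.diff_fst (hf : Smooth2 f) (t : ℝ) : Differentiable ℝ (fun y => f y t) := by
  have h : (fun y => f y t) = Function.uncurry f ∘ fun y => (y, t) := rfl
  rw [h]
  exact (hf.differentiable (by simp)).comp (differentiable_id.prodMk (differentiable_const t))

lemma Smooth2.diff_snd (hf : Smooth2 f) (x : ℝ) : Differentiable ℝ (fun s => f x s) := by
  have h : (fun s => f x s) = Function.uncurry f ∘ fun s => (x, s) := rfl
  rw [h]
  exact (hf.differentiable (by simp)).comp ((differentiable_const x).prodMk differentiable_id)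

lemma Smooth2.hasDerivAt_fst (hf : Smooth2 f) (x t : ℝ) :
    HasDerivAt (fun y => f y t) (px f x t) x :=
  (hf.diff_fst t x).hasDerivAt

lemma Smooth2.hasDerivAt_snd (hf : Smooth2 f) (x t : ℝ) :
    HasDerivAt (fun s => f x s) (pt f x t) t :=
  (hf.diff_snd x t).hasDerivAt

lemma Smooth2.smooth_px (hf : Smooth2 f) : Smooth2 (_root_.px f) := by
  have key : ∀ x t : ℝ, px f x t = fderiv ℝ (Function.uncurry f) (x, t) (1, 0) := by
    intro x t
    have hc : HasDerivAt (fun y => ((y, t) : ℝ × ℝ)) ((1 : ℝ), (0 : ℝ)) x :=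
      HasDerivAt.prodMk (hasDerivAt_id x) (hasDerivAt_const x t)
    have hF := (hf.differentiable (by simp) (x, t)).hasFDerivAt
    have h2 := hF.comp_hasDerivAt x hc
    simpa [px, Function.comp_def] using h2.deriv
  have h : Function.uncurry (px f) = fun p : ℝ × ℝ => fderiv ℝ (Function.uncurry f) p (1, 0) := by
    funext p; exact key p.1 p.2
  rw [Smooth2, h]
  exact (hf.fderiv_right (by simp)).clm_apply contDiff_const

end Helpers

/-- Divergence identity for the multiplier pair `(Λ¹, Λ²) = (−t v, x − t u)`
underlying the fourth conservation law of Theorem 7. -/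
theorem wbk_multiplier_identity_txv (α τ : ℝ) (u v : ℝ → ℝ → ℝ)
    (hu : Smooth2 u) (hv : Smooth2 v) (x t : ℝ) :
    (-t * v x t) * wbk1 α u v x t + (x - t * u x t) * wbk2 α τ u v x t =
      pt (fun a b => -b * (u a b * v a b) + a * v a b) x t
      + px (fun a b => -b * (u a b) ^ 2 * v a b + α * b * u a b * px v a b
          - α * b * px u a b * v a b - (1 / 2) * b * (v a b) ^ 2
          + a * (u a b * v a b) - τ * b * u a b * px (px u) a b
          + (1 / 2) * τ * b * (px u a b) ^ 2 - τ * px u a b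
          + τ * a * px (px u) a b + α * v a b - α * a * px v a b) x t := by
  have hU := hu.hasDerivAt_fst x t
  have hV := hv.hasDerivAt_fst x t
  have hUx := hu.smooth_px.hasDerivAt_fst x t
  have hVx := hv.smooth_px.hasDerivAt_fst x t
  have hUxx := hu.smooth_px.smooth_px.hasDerivAt_fst x t
  have hut := hu.hasDerivAt_snd x t
  have hvt := hv.hasDerivAt_snd x t
  have hid := hasDerivAt_id x
  have e1 : pt (fun a b => -b * (u a b * v a b) + a * v a b) x t
      = -(u x t * v x t) + -t * (pt u x t * v x t + u x t * pt v x t) + x * pt v x t := by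
    have h := (((hasDerivAt_id t).neg.mul (hut.mul hvt)).add (hvt.const_mul x)).deriv
    exact h.trans (by simp only [id_eq, Pi.mul_apply, Pi.neg_apply]; ring)
  have e2 : px (fun a b => -b * (u a b) ^ 2 * v a b + α * b * u a b * px v a b
          - α * b * px u a b * v a b - (1 / 2) * b * (v a b) ^ 2
          + a * (u a b * v a b) - τ * b * u a b * px (px u) a b
          + (1 / 2) * τ * b * (px u a b) ^ 2 - τ * px u a b
          + τ * a * px (px u) a b + α * v a b - α * a * px v a b) x t
      = -t * (2 * u x t * px u x t * v x t + (u x t) ^ 2 * px v x t)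
        + α * t * (px u x t * px v x t + u x t * px (px v) x t)
        - α * t * (px (px u) x t * v x t + px u x t * px v x t)
        - t * v x t * px v x t
        + (u x t * v x t + x * (px u x t * v x t + u x t * px v x t))
        - τ * t * (px u x t * px (px u) x t + u x t * px (px (px u)) x t)
        + τ * t * px u x t * px (px u) x t
        - τ * px (px u) x t
        + (τ * px (px u) x t + τ * x * px (px (px u)) x t)
        + α * px v x t
        - (α * px v x t + α * x * px (px v) x t) := by
    have h := (((((((((((((hU.pow 2).const_mul (-t)).mul hV).add
        ((hU.const_mul (α * t)).mul hVx)).sub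
        ((hUx.const_mul (α * t)).mul hV)).sub
        ((hV.pow 2).const_mul (1 / 2 * t))).add
        (hid.mul (hU.mul hV))).sub
        ((hU.const_mul (τ * t)).mul hUxx)).add
        ((hUx.pow 2).const_mul (1 / 2 * τ * t))).sub
        (hUx.const_mul τ)).add
        ((hid.const_mul τ).mul hUxx)).add
        (hV.const_mul α)).sub
        ((hid.const_mul α).mul hVx)).deriv
    exact h.trans (by simp only [id_eq, Pi.pow_apply, Pi.mul_apply]; push_cast; ring)
  have e3 : px (fun a b => u a b * v a b) x t
      = px u x t * v x t + u x t * px v x t := (hU.mul hV).deriv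
  simp only [wbk1, wbk2]
  rw [e1, e2, e3]
  ring
end

section
/- Let α, τ ∈ ℝ and let F : ℝ → ℝ be a smooth function satisfying (τ + α²)·F‴(x) − (3/2)·F′(x)·F(x)² = 0 for all x ∈ ℝ. Define G : ℝ → ℝ by G(x) = −α·F′(x) − ½·F(x)². Then u(x,t) = F(x), v(x,t) = G(x) solves the Whitham–Broer–Kaup system at every (x,t) ∈ ℝ²; in particular F(x)F′(x) + G′(x) + αF″(x) = 0 and F(x)G′(x) + G(x)F′(x) + τF‴(x) − αG″(x) = 0 for all x ∈ ℝ. -/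
/-- Section 4(I): solutions of the autonomous ODE
`(τ+α²)F‴ − (3/2)F′F² = 0` together with `G = −αF′ − F²/2`
yield steady solutions of the Whitham–Broer–Kaup system. -/
theorem wbk_steady_autonomous_reduction (α τ : ℝ) (F G : ℝ → ℝ)
    (hF : ContDiff ℝ (⊤ : ℕ∞) F)
    (hODE : ∀ x : ℝ, (τ + α ^ 2) * deriv (deriv (deriv F)) x
      - (3 / 2) * deriv F x * (F x) ^ 2 = 0)
    (hG : ∀ x : ℝ, G x = -α * deriv F x - (1 / 2) * (F x) ^ 2) :
    WBK α τ (fun x _ => F x) (fun x _ => G x) ∧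
      ∀ x : ℝ,
        F x * deriv F x + deriv G x + α * deriv (deriv F) x = 0 ∧
        F x * deriv G x + G x * deriv F x + τ * deriv (deriv (deriv F)) x
          - α * deriv (deriv G) x = 0 := by
  have hFi : ContDiff ℝ (⊤ : ℕ∞) F := hF.of_le (by simp)
  have hF' : ContDiff ℝ (⊤ : ℕ∞) (deriv F) := (contDiff_infty_iff_deriv.mp hFi).2
  have hF'' : ContDiff ℝ (⊤ : ℕ∞) (deriv (deriv F)) := (contDiff_infty_iff_deriv.mp hF').2
  have dF : Differentiable ℝ F := (contDiff_infty_iff_deriv.mp hFi).1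
  have dF' : Differentiable ℝ (deriv F) := (contDiff_infty_iff_deriv.mp hF').1
  have dF'' : Differentiable ℝ (deriv (deriv F)) := (contDiff_infty_iff_deriv.mp hF'').1
  have hGdef : G = fun x => -α * deriv F x - (1 / 2) * (F x) ^ 2 := funext hG
  subst hGdef
  have dG : Differentiable ℝ (fun x => -α * deriv F x - (1 / 2) * (F x) ^ 2) := by
    fun_prop
  have hG1 : deriv (fun x => -α * deriv F x - (1 / 2) * (F x) ^ 2)
      = fun x => -α * deriv (deriv F) x - F x * deriv F x := by
    funext x
    rw [deriv_fun_sub ((dF' x).const_mul _) (((dF x).fun_pow 2).const_mul _),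
        deriv_const_mul _ (dF' x), deriv_const_mul _ ((dF x).fun_pow 2), deriv_fun_pow (dF x) 2]
    ring
  have dG1 : Differentiable ℝ (fun x => -α * deriv (deriv F) x - F x * deriv F x) := by
    fun_prop
  have hG2 : ∀ x, deriv (deriv (fun x => -α * deriv F x - (1 / 2) * (F x) ^ 2)) x
      = -α * deriv (deriv (deriv F)) x - (deriv F x * deriv F x + F x * deriv (deriv F) x) := by
    intro x
    rw [hG1, deriv_fun_sub ((dF'' x).const_mul _) ((dF x).fun_mul (dF' x)),
        deriv_const_mul _ (dF'' x), deriv_fun_mul (dF x) (dF' x)]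
  have key1 : ∀ x : ℝ, F x * deriv F x
      + deriv (fun x => -α * deriv F x - (1 / 2) * (F x) ^ 2) x
      + α * deriv (deriv F) x = 0 := by
    intro x; rw [hG1]; ring
  have key2 : ∀ x : ℝ, F x * deriv (fun x => -α * deriv F x - (1 / 2) * (F x) ^ 2) x
      + (-α * deriv F x - (1 / 2) * (F x) ^ 2) * deriv F x
      + τ * deriv (deriv (deriv F)) x
      - α * deriv (deriv (fun x => -α * deriv F x - (1 / 2) * (F x) ^ 2)) x = 0 := by
    intro x; rw [hG2, hG1]; simp only []; linear_combination hODE x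
  refine ⟨fun x t => ?_, fun x => ⟨key1 x, key2 x⟩⟩
  constructor
  · show deriv (fun _ => F x) t + F x * deriv F x
      + deriv (fun x => -α * deriv F x - (1 / 2) * (F x) ^ 2) x
      + α * deriv (deriv F) x = 0
    rw [deriv_const]
    simpa using key1 x
  · show deriv (fun _ => -α * deriv F x - (1 / 2) * (F x) ^ 2) t
      + deriv (fun a => F a * (-α * deriv F a - (1 / 2) * (F a) ^ 2)) x
      + τ * deriv (deriv (deriv F)) x
      - α * deriv (deriv (fun x => -α * deriv F x - (1 / 2) * (F x) ^ 2)) x = 0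
    rw [deriv_const, deriv_fun_mul (dF x) (dG x)]
    have := key2 x
    linarith [key2 x]
end

section
/- Let α, τ ∈ ℝ with α² + τ > 0, let υ₁, υ₂ ∈ ℝ with υ₂² > υ₁², and let p ∈ ℝ satisfy p² = 2(υ₂² − υ₁²). Define ψ(x) = υ₁·cosh(x) + υ₂·sinh(x) − p, a₀ = (1/3)·√(6(α² + τ)), and a₂ = 6p(α² + τ)/√(6(α² + τ)). Then for each sign σ ∈ {1, −1}, the function F(x) = σ·(a₀ + a₂/ψ(x)) satisfies (τ + α²)·F‴(x) − (3/2)·F′(x)·F(x)² = 0 at every x ∈ ℝ with ψ(x) ≠ 0. -/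
/-!
The profile is `F = a (1 + 3p/ψ)` with `a = σ √(6(α²+τ)) / 3`, and `ψ` solves `ψ'' = ψ + p` with the
first integral `ψ'² = (ψ + p)² + p²/2` (from `cosh² − sinh² = 1` and `p² = 2(υ₂² − υ₁²)`).
Differentiating `1/ψ` three times and eliminating `ψ'²` by the first integral gives
`F''' = −3pa ψ' (ψ + 3p)² / ψ⁴`, while `F' F² = −3pa³ ψ' (ψ + 3p)² / ψ⁴`; hence
`(3a²/2) F''' = (3/2) F' F²`, and `τ + α² = 3a²/2` because `σ² = 1`.
-/

/-- The simplest-equation ansatz function `ψ(x) = υ₁ cosh x + υ₂ sinh x − p`. -/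
noncomputable def ψhyp (υ₁ υ₂ p : ℝ) : ℝ → ℝ :=
  fun x => υ₁ * Real.cosh x + υ₂ * Real.sinh x - p

/-- The hyperbolic-rational profile `F(x) = σ (a₀ + a₂/ψ(x))` with
`a₀ = (1/3)√(6(α²+τ))` and `a₂ = 6p(α²+τ)/√(6(α²+τ))`. -/
noncomputable def Fhyp (α τ υ₁ υ₂ p σ : ℝ) : ℝ → ℝ :=
  fun x => σ * ((1 / 3) * Real.sqrt (6 * (α ^ 2 + τ))
    + (6 * p * (α ^ 2 + τ) / Real.sqrt (6 * (α ^ 2 + τ))) / ψhyp υ₁ υ₂ p x)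

open Set

section Reciprocal

variable {ψ D : ℝ → ℝ} {p : ℝ}

theorem hasDerivAt_const_add_div (a b : ℝ) {y : ℝ} (hψ : HasDerivAt ψ (D y) y) (hy : ψ y ≠ 0) :
    HasDerivAt (fun z => a + b / ψ z) (-(b * D y) / ψ y ^ 2) y := by
  refine (((hasDerivAt_const y b).div hψ hy).const_add a).congr_deriv ?_
  ring

theorem hasDerivAt_div_sq (b : ℝ) {y : ℝ} (hψ : HasDerivAt ψ (D y) y)
    (hD : HasDerivAt D (ψ y + p) y) (hy : ψ y ≠ 0) :
    HasDerivAt (fun z => -(b * D z) / ψ z ^ 2)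
      (b * (2 * D y ^ 2 - (ψ y + p) * ψ y) / ψ y ^ 3) y := by
  refine ((hD.const_mul b).neg.div (hψ.pow 2) (pow_ne_zero 2 hy)).congr_deriv ?_
  simp only [Pi.pow_apply, Pi.neg_apply]
  field_simp
  ring

theorem hasDerivAt_div_cube (b : ℝ) {y : ℝ} (hψ : HasDerivAt ψ (D y) y)
    (hD : HasDerivAt D (ψ y + p) y) (hy : ψ y ≠ 0) :
    HasDerivAt (fun z => b * (2 * D z ^ 2 - (ψ z + p) * ψ z) / ψ z ^ 3)
      (b * (-D y * ψ y ^ 2 + 6 * D y * (ψ y + p) * ψ y - 6 * D y ^ 3) / ψ y ^ 4) y := by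
  have hnum := (((hD.pow 2).const_mul 2).sub ((hψ.add_const p).mul hψ)).const_mul b
  refine (hnum.div (hψ.pow 3) (pow_ne_zero 3 hy)).congr_deriv ?_
  simp only [Pi.pow_apply, Pi.sub_apply, Pi.mul_apply]
  field_simp
  ring

theorem deriv_deriv_deriv_const_add_div (a b : ℝ) (hψ : ∀ y, HasDerivAt ψ (D y) y)
    (hD : ∀ y, HasDerivAt D (ψ y + p) y) {x : ℝ} (hx : ψ x ≠ 0) :
    deriv (deriv (deriv (fun z => a + b / ψ z))) x =
      b * (-D x * ψ x ^ 2 + 6 * D x * (ψ x + p) * ψ x - 6 * D x ^ 3) / ψ x ^ 4 := by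
  set U := {y | ψ y ≠ 0}
  have hU : IsOpen U :=
    isOpen_compl_singleton.preimage (continuous_iff_continuousAt.2 fun y => (hψ y).continuousAt)
  have h₁ : EqOn (deriv fun z => a + b / ψ z) (fun z => -(b * D z) / ψ z ^ 2) U :=
    fun y hy => (hasDerivAt_const_add_div a b (hψ y) hy).deriv
  have h₂ : EqOn (deriv fun z => -(b * D z) / ψ z ^ 2)
      (fun z => b * (2 * D z ^ 2 - (ψ z + p) * ψ z) / ψ z ^ 3) U :=
    fun y hy => (hasDerivAt_div_sq b (hψ y) (hD y) hy).deriv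
  rw [(h₁.deriv hU).deriv hU hx, h₂.deriv hU hx, (hasDerivAt_div_cube b (hψ x) (hD x) hx).deriv]

theorem steady_wbk_const_add_div (a : ℝ) (hψ : ∀ y, HasDerivAt ψ (D y) y)
    (hD : ∀ y, HasDerivAt D (ψ y + p) y) {x : ℝ} (hint : D x ^ 2 = (ψ x + p) ^ 2 + p ^ 2 / 2)
    (hx : ψ x ≠ 0) :
    3 / 2 * a ^ 2 * deriv (deriv (deriv (fun z => a + 3 * p * a / ψ z))) x
      - 3 / 2 * deriv (fun z => a + 3 * p * a / ψ z) x * (a + 3 * p * a / ψ x) ^ 2 = 0 := by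
  rw [deriv_deriv_deriv_const_add_div a _ hψ hD hx,
    (hasDerivAt_const_add_div a _ (hψ x) hx).deriv]
  have hcube : D x ^ 3 = D x * ((ψ x + p) ^ 2 + p ^ 2 / 2) := by rw [← hint]; ring
  rw [hcube]
  field_simp
  ring

end Reciprocal

noncomputable def ψhypDeriv (υ₁ υ₂ : ℝ) : ℝ → ℝ :=
  fun x => υ₁ * Real.sinh x + υ₂ * Real.cosh x

theorem hasDerivAt_ψhyp (υ₁ υ₂ p x : ℝ) : HasDerivAt (ψhyp υ₁ υ₂ p) (ψhypDeriv υ₁ υ₂ x) x :=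
  (((Real.hasDerivAt_cosh x).const_mul υ₁).add ((Real.hasDerivAt_sinh x).const_mul υ₂)).sub_const p

theorem hasDerivAt_ψhypDeriv (υ₁ υ₂ p x : ℝ) :
    HasDerivAt (ψhypDeriv υ₁ υ₂) (ψhyp υ₁ υ₂ p x + p) x := by
  refine (((Real.hasDerivAt_sinh x).const_mul υ₁).add
    ((Real.hasDerivAt_cosh x).const_mul υ₂)).congr_deriv ?_
  simp only [ψhyp]
  ring

theorem ψhypDeriv_sq (υ₁ υ₂ p x : ℝ) :
    ψhypDeriv υ₁ υ₂ x ^ 2 = (ψhyp υ₁ υ₂ p x + p) ^ 2 + (υ₂ ^ 2 - υ₁ ^ 2) := by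
  simp only [ψhypDeriv, ψhyp]
  linear_combination (υ₂ ^ 2 - υ₁ ^ 2) * Real.cosh_sq_sub_sinh_sq x

theorem Fhyp_eq (α τ υ₁ υ₂ p σ : ℝ) (hpos : α ^ 2 + τ > 0) :
    Fhyp α τ υ₁ υ₂ p σ = fun z =>
      σ * √(6 * (α ^ 2 + τ)) / 3 + 3 * p * (σ * √(6 * (α ^ 2 + τ)) / 3) / ψhyp υ₁ υ₂ p z := by
  have ha₂ : 6 * p * (α ^ 2 + τ) / √(6 * (α ^ 2 + τ)) = p * √(6 * (α ^ 2 + τ)) := by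
    rw [div_eq_iff (by positivity), mul_assoc p, Real.mul_self_sqrt (by positivity)]
    ring
  funext z
  simp only [Fhyp, ha₂]
  ring

theorem wbk_hyperbolic_solution_general (α τ υ₁ υ₂ p σ : ℝ)
    (hpos : α ^ 2 + τ > 0)
    (hp : p ^ 2 = 2 * (υ₂ ^ 2 - υ₁ ^ 2)) (hσ : σ = 1 ∨ σ = -1) :
    ∀ x : ℝ, ψhyp υ₁ υ₂ p x ≠ 0 →
      (τ + α ^ 2) * deriv (deriv (deriv (Fhyp α τ υ₁ υ₂ p σ))) x
        - (3 / 2) * deriv (Fhyp α τ υ₁ υ₂ p σ) x * (Fhyp α τ υ₁ υ₂ p σ x) ^ 2 = 0 := by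
  intro x hx
  set a := σ * √(6 * (α ^ 2 + τ)) / 3
  have hσ2 : σ ^ 2 = 1 := by rcases hσ with rfl | rfl <;> norm_num
  have hk : τ + α ^ 2 = 3 / 2 * a ^ 2 := by
    rw [div_pow, mul_pow, hσ2, Real.sq_sqrt (by positivity)]
    ring
  have hint : ψhypDeriv υ₁ υ₂ x ^ 2 = (ψhyp υ₁ υ₂ p x + p) ^ 2 + p ^ 2 / 2 := by
    rw [ψhypDeriv_sq υ₁ υ₂ p, hp]
    ring
  rw [hk, Fhyp_eq α τ υ₁ υ₂ p σ hpos]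
  exact steady_wbk_const_add_div a (hasDerivAt_ψhyp υ₁ υ₂ p) (hasDerivAt_ψhypDeriv υ₁ υ₂ p) hint hx

/-- Case-i of Section 4(I): the hyperbolic-rational family solves the
autonomous steady ODE `(τ+α²)F‴ − (3/2)F′F² = 0` wherever `ψ ≠ 0`. -/
theorem wbk_hyperbolic_solution (α τ υ₁ υ₂ p σ : ℝ)
    (hpos : α ^ 2 + τ > 0) (hυ : υ₂ ^ 2 > υ₁ ^ 2)
    (hp : p ^ 2 = 2 * (υ₂ ^ 2 - υ₁ ^ 2)) (hσ : σ = 1 ∨ σ = -1) :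
    ∀ x : ℝ, ψhyp υ₁ υ₂ p x ≠ 0 →
      (τ + α ^ 2) * deriv (deriv (deriv (Fhyp α τ υ₁ υ₂ p σ))) x
        - (3 / 2) * deriv (Fhyp α τ υ₁ υ₂ p σ) x * (Fhyp α τ υ₁ υ₂ p σ x) ^ 2 = 0 :=
  wbk_hyperbolic_solution_general α τ υ₁ υ₂ p σ hpos hp hσ
end

section
/- Let α, τ ∈ ℝ with α² + τ ≥ 0, and let p, υ₁, υ₂ ∈ ℝ with υ₁² − 2υ₂p ≥ 0. Define ψ(x) = (p/2)x² + υ₁x + υ₂, a₁ = √(α² + τ), and a₂ = √((α² + τ)(υ₁² − 2υ₂p)). Then the function F(x) = a₁·ψ′(x)/ψ(x) + a₂/ψ(x) satisfies (τ + α²)·F‴(x) − (3/2)·F′(x)·F(x)² = 0 at every x ∈ ℝ with ψ(x) ≠ 0. -/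
/-!
With `N = a₁ψ' + a₂`, the quantity `ψ'² − 2pψ = υ₁² − 2υ₂p` is constant, so `a₂² = a₁²(υ₁² − 2υ₂p)`
gives `N (N − 2a₁ψ') = a₂² − a₁²ψ'² = −2a₁²pψ`, which says precisely that `F = N/ψ` solves the
Riccati equation `F' = −F²/(2a₁)`. Every solution of `F' = kF²` has `F⁽ⁿ⁾ = n! kⁿ Fⁿ⁺¹`, and for
`k = −1/(2a₁)` the two terms of the ODE cancel. When `α² + τ ≤ 0` both square roots vanish and
`F ≡ 0`.
-/

/-- The simplest-equation ansatz function `ψ(x) = (p/2)x² + υ₁ x + υ₂`. -/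
noncomputable def ψrat (p υ₁ υ₂ : ℝ) : ℝ → ℝ :=
  fun x => (p / 2) * x ^ 2 + υ₁ * x + υ₂

/-- The rational profile `F(x) = a₁ ψ′(x)/ψ(x) + a₂/ψ(x)` with
`a₁ = √(α²+τ)` and `a₂ = √((α²+τ)(υ₁² − 2υ₂p))`. -/
noncomputable def Frat (α τ p υ₁ υ₂ : ℝ) : ℝ → ℝ :=
  fun x => Real.sqrt (α ^ 2 + τ) * deriv (ψrat p υ₁ υ₂) x / ψrat p υ₁ υ₂ x
    + Real.sqrt ((α ^ 2 + τ) * (υ₁ ^ 2 - 2 * υ₂ * p)) / ψrat p υ₁ υ₂ x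

open Filter Topology Nat

section Riccati

variable {F : ℝ → ℝ} {k : ℝ}

lemma hasDerivAt_pow_of_riccati {y : ℝ} (hF : HasDerivAt F (k * F y ^ 2) y) (n : ℕ) :
    HasDerivAt (fun z => F z ^ n) (n * k * F y ^ (n + 1)) y :=
  (hF.pow n).congr_deriv (by cases n <;> simp [pow_succ]; ring)

lemma iterate_deriv_eqOn_of_riccati {U : Set ℝ} (hU : IsOpen U)
    (hF : ∀ y ∈ U, HasDerivAt F (k * F y ^ 2) y) (n : ℕ) :
    Set.EqOn (deriv^[n] F) (fun y => n ! * k ^ n * F y ^ (n + 1)) U := by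
  induction n with
  | zero => intro y _; simp
  | succ n ih =>
    intro y hy
    have hnear : deriv^[n] F =ᶠ[𝓝 y] fun z => n ! * k ^ n * F z ^ (n + 1) :=
      eventually_of_mem (hU.mem_nhds hy) ih
    rw [Function.iterate_succ_apply', hnear.deriv_eq,
      ((hasDerivAt_pow_of_riccati (hF y hy) (n + 1)).const_mul (n ! * k ^ n)).deriv]
    push_cast [factorial_succ]
    ring

end Riccati

lemma sq_deriv_sub_ψrat (p υ₁ υ₂ x : ℝ) :
    (p * x + υ₁) ^ 2 - 2 * p * ψrat p υ₁ υ₂ x = υ₁ ^ 2 - 2 * υ₂ * p := by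
  simp only [ψrat]
  ring

section Rational

variable {p υ₁ υ₂ : ℝ}

lemma hasDerivAt_ψrat (x : ℝ) : HasDerivAt (ψrat p υ₁ υ₂) (p * x + υ₁) x := by
  have h := (((hasDerivAt_pow 2 x).const_mul (p / 2)).add
    ((hasDerivAt_id x).const_mul υ₁)).add_const υ₂
  exact h.congr_deriv (by simp; ring)

lemma continuous_ψrat : Continuous (ψrat p υ₁ υ₂) := by
  unfold ψrat
  fun_prop

lemma hasDerivAt_rational_riccati {a b : ℝ} (ha : a ≠ 0)
    (hb : b ^ 2 = a ^ 2 * (υ₁ ^ 2 - 2 * υ₂ * p)) {x : ℝ} (hx : ψrat p υ₁ υ₂ x ≠ 0) :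
    HasDerivAt (fun y => (a * (p * y + υ₁) + b) / ψrat p υ₁ υ₂ y)
      (-(2 * a)⁻¹ * ((a * (p * x + υ₁) + b) / ψrat p υ₁ υ₂ x) ^ 2) x := by
  have hN : HasDerivAt (fun y => a * (p * y + υ₁) + b) (a * p) x := by
    simpa using ((((hasDerivAt_id x).const_mul p).add_const υ₁).const_mul a).add_const b
  refine (hN.div (hasDerivAt_ψrat x) hx).congr_deriv ?_
  field_simp
  linear_combination hb - a ^ 2 * sq_deriv_sub_ψrat p υ₁ υ₂ x

end Rational

lemma Frat_eq (α τ p υ₁ υ₂ : ℝ) :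
    Frat α τ p υ₁ υ₂ = fun y => (Real.sqrt (α ^ 2 + τ) * (p * y + υ₁)
      + Real.sqrt ((α ^ 2 + τ) * (υ₁ ^ 2 - 2 * υ₂ * p))) / ψrat p υ₁ υ₂ y := by
  funext y
  rw [Frat, (hasDerivAt_ψrat y).deriv, add_div]

lemma Frat_eq_zero {α τ p υ₁ υ₂ : ℝ} (hc : α ^ 2 + τ ≤ 0) (hdisc : υ₁ ^ 2 - 2 * υ₂ * p ≥ 0) :
    Frat α τ p υ₁ υ₂ = 0 := by
  funext y
  simp [Frat, Real.sqrt_eq_zero'.mpr hc,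
    Real.sqrt_eq_zero'.mpr (mul_nonpos_of_nonpos_of_nonneg hc hdisc)]

theorem wbk_rational_solution_general (α τ p υ₁ υ₂ : ℝ)
    (hdisc : υ₁ ^ 2 - 2 * υ₂ * p ≥ 0) :
    ∀ x : ℝ, ψrat p υ₁ υ₂ x ≠ 0 →
      (τ + α ^ 2) * deriv (deriv (deriv (Frat α τ p υ₁ υ₂))) x
        - (3 / 2) * deriv (Frat α τ p υ₁ υ₂) x * (Frat α τ p υ₁ υ₂ x) ^ 2 = 0 := by
  intro x hx
  rcases le_or_gt (α ^ 2 + τ) 0 with hc | hc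
  · simp [Frat_eq_zero hc hdisc]
  set a := Real.sqrt (α ^ 2 + τ)
  have ha : a ≠ 0 := (Real.sqrt_pos.mpr hc).ne'
  have ha2 : a ^ 2 = α ^ 2 + τ := Real.sq_sqrt hc.le
  have hb : Real.sqrt ((α ^ 2 + τ) * (υ₁ ^ 2 - 2 * υ₂ * p)) ^ 2
      = a ^ 2 * (υ₁ ^ 2 - 2 * υ₂ * p) := by
    rw [Real.sq_sqrt (mul_nonneg hc.le hdisc), ha2]
  have hriccati : ∀ y ∈ {y | ψrat p υ₁ υ₂ y ≠ 0},
      HasDerivAt (Frat α τ p υ₁ υ₂) (-(2 * a)⁻¹ * Frat α τ p υ₁ υ₂ y ^ 2) y := by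
    intro y hy
    rw [Frat_eq]
    exact hasDerivAt_rational_riccati ha hb hy
  have hderiv := iterate_deriv_eqOn_of_riccati
    (isOpen_compl_singleton.preimage continuous_ψrat) hriccati
  have h1 : deriv (Frat α τ p υ₁ υ₂) x = _ := hderiv 1 hx
  have h3 : deriv (deriv (deriv (Frat α τ p υ₁ υ₂))) x = _ := hderiv 3 hx
  rw [h1, h3]
  field_simp
  norm_num [factorial]
  linear_combination (6 * Frat α τ p υ₁ υ₂ x ^ 4) * ha2

/-- Case-iii of Section 4(I): the rational family solves the autonomous
steady ODE `(τ+α²)F‴ − (3/2)F′F² = 0` wherever `ψ ≠ 0`. -/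
theorem wbk_rational_solution (α τ p υ₁ υ₂ : ℝ)
    (hpos : α ^ 2 + τ ≥ 0) (hdisc : υ₁ ^ 2 - 2 * υ₂ * p ≥ 0) :
    ∀ x : ℝ, ψrat p υ₁ υ₂ x ≠ 0 →
      (τ + α ^ 2) * deriv (deriv (deriv (Frat α τ p υ₁ υ₂))) x
        - (3 / 2) * deriv (Frat α τ p υ₁ υ₂) x * (Frat α τ p υ₁ υ₂ x) ^ 2 = 0 :=
  wbk_rational_solution_general α τ p υ₁ υ₂ hdisc
end

section
/- Let α, τ ∈ ℝ and let c₁, c₂ ∈ ℝ be arbitrary constants. Then the functions u(x,t) = (x + c₁)/t and v(x,t) = c₂/t satisfy the Whitham–Broer–Kaup system ∂ₜu + u∂ₓu + ∂ₓv + α∂ₓₓu = 0 and ∂ₜv + ∂ₓ(uv) + τ∂ₓₓₓu − α∂ₓₓv = 0 at every point (x,t) ∈ ℝ² with t ≠ 0. -/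
/-- Exact group-invariant solution from the generator `V₃` (Section 4(III)):
`u = (x + c₁)/t`, `v = c₂/t` solves the WBK system for `t ≠ 0`. -/
theorem wbk_V3_invariant_solution (α τ c₁ c₂ : ℝ) :
    ∀ x t : ℝ, t ≠ 0 →
      wbk1 α (fun a b => (a + c₁) / b) (fun _ b => c₂ / b) x t = 0 ∧
      wbk2 α τ (fun a b => (a + c₁) / b) (fun _ b => c₂ / b) x t = 0 := by
  intro x t ht
  have hpxu : px (fun a b => (a + c₁) / b) = fun _ b => 1 / b := by
    funext a b
    simp [px, div_eq_mul_inv]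
  have hptu : pt (fun a b => (a + c₁) / b) x t = -(x + c₁) / t ^ 2 := by
    simp [pt, div_eq_mul_inv, ht]
    ring
  have hpxv : px (fun _ b : ℝ => c₂ / b) = fun _ _ => 0 := by
    funext a b
    simp [px]
  have hptv : pt (fun _ b : ℝ => c₂ / b) x t = -c₂ / t ^ 2 := by
    simp [pt, div_eq_mul_inv, ht]
  have hpxuv : px (fun a b => (a + c₁) / b * (c₂ / b)) x t = c₂ / t ^ 2 := by
    simp only [px, div_mul_div_comm]
    rw [show (fun y => (y + c₁) * c₂ / (t * t)) = fun y => (y + c₁) * (c₂ / (t * t)) by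
      funext y; ring]
    simp [deriv_mul_const, ht, sq]
  constructor
  · simp only [wbk1, hpxu, hptu, hpxv]
    rw [show px (fun _ b : ℝ => 1 / b) = fun _ _ => 0 by funext a b; simp [px]]
    field_simp
    ring
  · simp only [wbk2, hpxu, hptv, hpxv, hpxuv]
    rw [show px (fun _ b : ℝ => 1 / b) = fun _ _ => 0 by funext a b; simp [px]]
    rw [show px (fun _ _ : ℝ => (0:ℝ)) = fun _ _ => 0 by funext a b; simp [px]]
    simp [px]
    ring
end

section
/- Let α, τ ∈ ℝ. Then the functions u(x,t) = 2x/(3t) and v(x,t) = −2α/(3t) + x²/(9t²) satisfy the Whitham–Broer–Kaup system ∂ₜu + u∂ₓu + ∂ₓv + α∂ₓₓu = 0 and ∂ₜv + ∂ₓ(uv) + τ∂ₓₓₓu − α∂ₓₓv = 0 at every point (x,t) ∈ ℝ² with t ≠ 0. -/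
lemma deriv_poly3 (a b c d x : ℝ) :
    deriv (fun y : ℝ => a + b * y + c * y ^ 2 + d * y ^ 3) x
      = b + 2 * c * x + 3 * d * x ^ 2 := by
  have h : HasDerivAt (fun y : ℝ => a + b * y + c * y ^ 2 + d * y ^ 3)
      (b + 2 * c * x + 3 * d * x ^ 2) x := by
    have h1 := (hasDerivAt_id x).const_mul b
    have h2 := (hasDerivAt_pow 2 x).const_mul c
    have h3 := (hasDerivAt_pow 3 x).const_mul d
    have := (((hasDerivAt_const x a).add h1).add h2).add h3
    exact this.congr_deriv (by push_cast; ring)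
  exact h.deriv

/-- Explicit similarity solution from the scaling generator `V₄`
(Section 4(IV)): `u = 2x/(3t)`, `v = −2α/(3t) + x²/(9t²)` solves the WBK
system for `t ≠ 0`. -/
theorem wbk_V4_similarity_solution (α τ : ℝ) :
    ∀ x t : ℝ, t ≠ 0 →
      wbk1 α (fun a b => 2 * a / (3 * b))
        (fun a b => -2 * α / (3 * b) + a ^ 2 / (9 * b ^ 2)) x t = 0 ∧
      wbk2 α τ (fun a b => 2 * a / (3 * b))
        (fun a b => -2 * α / (3 * b) + a ^ 2 / (9 * b ^ 2)) x t = 0 := by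
  intro x t ht
  set u : ℝ → ℝ → ℝ := fun a b => 2 * a / (3 * b) with hu
  set v : ℝ → ℝ → ℝ := fun a b => -2 * α / (3 * b) + a ^ 2 / (9 * b ^ 2) with hv
  -- x-derivatives (valid for all t, including 0)
  have hpxu : px u = fun _ b => 2 / (3 * b) := by
    funext a b
    have : (fun y : ℝ => u y b)
        = fun y => 0 + (2 / (3 * b)) * y + 0 * y ^ 2 + 0 * y ^ 3 := by
      funext y; simp [hu]; ring
    rw [px, this, deriv_poly3]; ring
  have hpxxu : px (px u) = fun _ _ => 0 := by
    funext a b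
    have : (fun y : ℝ => px u y b) = fun _ => 2 / (3 * b) := by rw [hpxu]
    rw [px, this, deriv_const]
  have hpxxxu : px (px (px u)) = fun _ _ => 0 := by
    funext a b
    have : (fun y : ℝ => px (px u) y b) = fun _ => 0 := by rw [hpxxu]
    rw [px, this, deriv_const]
  have hpxv : px v = fun a b => 2 * a / (9 * b ^ 2) := by
    funext a b
    have : (fun y : ℝ => v y b)
        = fun y => (-2 * α / (3 * b)) + 0 * y + (1 / (9 * b ^ 2)) * y ^ 2 + 0 * y ^ 3 := by
      funext y; simp [hv]; ring
    rw [px, this, deriv_poly3]; ring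
  have hpxxv : px (px v) = fun _ b => 2 / (9 * b ^ 2) := by
    funext a b
    have : (fun y : ℝ => px v y b)
        = fun y => 0 + (2 / (9 * b ^ 2)) * y + 0 * y ^ 2 + 0 * y ^ 3 := by
      funext y; rw [hpxv]; ring
    rw [px, this, deriv_poly3]; ring
  have hpxuv : px (fun a b => u a b * v a b)
      = fun a b => -4 * α / (9 * b ^ 2) + 2 * a ^ 2 / (9 * b ^ 3) := by
    funext a b
    have : (fun y : ℝ => u y b * v y b)
        = fun y => 0 + (-4 * α / (9 * b ^ 2)) * y + 0 * y ^ 2 + (2 / (27 * b ^ 3)) * y ^ 3 := by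
      funext y; simp [hu, hv]; ring
    rw [px, this, deriv_poly3]; ring
  -- t-derivatives at t ≠ 0
  have hptu : pt u x t = -2 * x / (3 * t ^ 2) := by
    have h1 : (fun s : ℝ => u x s) = fun s => (2 * x / 3) * s⁻¹ := by
      funext s; simp [hu]; ring
    have h2 : HasDerivAt (fun s : ℝ => (2 * x / 3) * s⁻¹)
        ((2 * x / 3) * (-(t ^ 2)⁻¹)) t := (hasDerivAt_inv ht).const_mul _
    rw [pt, h1, h2.deriv]
    field_simp
  have hptv : pt v x t = 2 * α / (3 * t ^ 2) - 2 * x ^ 2 / (9 * t ^ 3) := by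
    have h1 : (fun s : ℝ => v x s)
        = fun s => (-2 * α / 3) * s⁻¹ + (x ^ 2 / 9) * (s ^ 2)⁻¹ := by
      funext s; simp only [hv]; ring
    have h2 : HasDerivAt (fun s : ℝ => (-2 * α / 3) * s⁻¹ + (x ^ 2 / 9) * (s ^ 2)⁻¹)
        ((-2 * α / 3) * (-(t ^ 2)⁻¹)
          + (x ^ 2 / 9) * (-(2 * t ^ 1) / (t ^ 2) ^ 2)) t := by
      exact ((hasDerivAt_inv ht).const_mul _).add
        (((hasDerivAt_pow 2 t).inv (pow_ne_zero 2 ht)).const_mul _)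
    rw [pt, h1, h2.deriv]
    field_simp; ring
  constructor
  · simp only [wbk1, hptu]
    rw [hpxxu, hpxu, hpxv]
    simp only [hu]
    field_simp; ring
  · simp only [wbk2, hptv]
    rw [hpxuv, hpxxxu, hpxxv]
    simp only []
    field_simp; ring
end

section
/- Let α, τ ∈ ℝ. Then the functions u(x,t) = 1 + 2(x − t)/(3t) and v(x,t) = −2α/(3t) + (x − t)²/(9t²) satisfy the Whitham–Broer–Kaup system ∂ₜu + u∂ₓu + ∂ₓv + α∂ₓₓu = 0 and ∂ₜv + ∂ₓ(uv) + τ∂ₓₓₓu − α∂ₓₓv = 0 at every point (x,t) ∈ ℝ² with t ≠ 0. -/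
section aux
variable (α : ℝ)

variable (α : ℝ)

lemma hu (t x : ℝ) : HasDerivAt (fun y : ℝ => 1 + 2 * (y - t) / (3 * t)) (2 / (3 * t)) x := by
  have h := (((hasDerivAt_id x).sub_const t).const_mul 2).div_const (3 * t)
  simpa using (h.const_add 1)

lemma hv (t x : ℝ) : HasDerivAt (fun y : ℝ => -2 * α / (3 * t) + (y - t) ^ 2 / (9 * t ^ 2))
    (2 * (x - t) / (9 * t ^ 2)) x := by
  have h := (((hasDerivAt_id x).sub_const t).pow 2).div_const (9 * t ^ 2)
  have h2 := h.const_add (-2 * α / (3 * t))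
  simpa [mul_comm, mul_assoc, mul_left_comm] using h2

lemma pxu (x t : ℝ) : px (fun a b => 1 + 2 * (a - b) / (3 * b)) x t = 2 / (3 * t) :=
  (hu t x).deriv

lemma pxxu (x t : ℝ) : px (px (fun a b => 1 + 2 * (a - b) / (3 * b))) x t = 0 := by
  show deriv (fun y => px (fun a b => 1 + 2 * (a - b) / (3 * b)) y t) x = 0
  rw [show (fun y => px (fun a b => 1 + 2 * (a - b) / (3 * b)) y t) = fun _ : ℝ => 2 / (3 * t)
    from funext fun y => pxu y t]
  exact deriv_const x _

lemma pxxxu (x t : ℝ) : px (px (px (fun a b => 1 + 2 * (a - b) / (3 * b)))) x t = 0 := by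
  show deriv (fun y => px (px (fun a b => 1 + 2 * (a - b) / (3 * b))) y t) x = 0
  rw [show (fun y => px (px (fun a b => 1 + 2 * (a - b) / (3 * b))) y t) = fun _ : ℝ => (0:ℝ)
    from funext fun y => pxxu y t]
  exact deriv_const x _

lemma pxv (x t : ℝ) : px (fun a b => -2 * α / (3 * b) + (a - b) ^ 2 / (9 * b ^ 2)) x t
    = 2 * (x - t) / (9 * t ^ 2) := (hv α t x).deriv

lemma pxxv (x t : ℝ) : px (px (fun a b => -2 * α / (3 * b) + (a - b) ^ 2 / (9 * b ^ 2))) x t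
    = 2 / (9 * t ^ 2) := by
  show deriv (fun y => px (fun a b => -2 * α / (3 * b) + (a - b) ^ 2 / (9 * b ^ 2)) y t) x = _
  rw [show (fun y => px (fun a b => -2 * α / (3 * b) + (a - b) ^ 2 / (9 * b ^ 2)) y t)
      = fun y : ℝ => 2 * (y - t) / (9 * t ^ 2) from funext fun y => pxv α y t]
  have h := (((hasDerivAt_id x).sub_const t).const_mul 2).div_const (9 * t ^ 2)
  simpa using h.deriv

lemma ptu (x t : ℝ) (ht : t ≠ 0) :
    pt (fun a b => 1 + 2 * (a - b) / (3 * b)) x t = -2 * x / (3 * t ^ 2) := by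
  unfold pt
  have hnum : HasDerivAt (fun s : ℝ => 2 * (x - s)) (-2) t := by
    simpa using ((hasDerivAt_id t).const_sub x).const_mul 2
  have hden : HasDerivAt (fun s : ℝ => 3 * s) 3 t := by
    simpa using (hasDerivAt_id t).const_mul 3
  have h3t : (3 : ℝ) * t ≠ 0 := by positivity
  have h : HasDerivAt (fun s : ℝ => 1 + 2 * (x - s) / (3 * s)) _ t := (hnum.div hden h3t).const_add 1
  rw [h.deriv]
  field_simp
  ring

lemma ptv (x t : ℝ) (ht : t ≠ 0) :
    pt (fun a b => -2 * α / (3 * b) + (a - b) ^ 2 / (9 * b ^ 2)) x t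
      = 2 * α / (3 * t ^ 2) - 2 * x * (x - t) / (9 * t ^ 3) := by
  unfold pt
  have h3t : (3 : ℝ) * t ≠ 0 := by positivity
  have h9 : (9 : ℝ) * t ^ 2 ≠ 0 := by positivity
  have h1 : HasDerivAt (fun s : ℝ => -2 * α / (3 * s)) (-(-2 * α * 3) / (3 * t) ^ 2) t := by
    have hden : HasDerivAt (fun s : ℝ => 3 * s) 3 t := by
      simpa using (hasDerivAt_id t).const_mul 3
    exact ((hasDerivAt_const t (-2 * α)).div hden h3t).congr_deriv (by ring)
  have h2 : HasDerivAt (fun s : ℝ => (x - s) ^ 2 / (9 * s ^ 2))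
      ((2 * (x - t) ^ 1 * (-1) * (9 * t ^ 2) - (x - t) ^ 2 * (9 * (2 * t ^ 1))) / (9 * t ^ 2) ^ 2)
      t := by
    have hnum : HasDerivAt (fun s : ℝ => (x - s) ^ 2) (2 * (x - t) ^ 1 * (-1)) t := by
      have := ((hasDerivAt_id t).const_sub x).pow 2
      exact this.congr_deriv (by norm_num)
    have hden : HasDerivAt (fun s : ℝ => 9 * s ^ 2) (9 * (2 * t ^ 1)) t := by
      simpa using ((hasDerivAt_pow 2 t).const_mul 9)
    exact hnum.div hden h9
  have h12 : HasDerivAt (fun s : ℝ => -2 * α / (3 * s) + (x - s) ^ 2 / (9 * s ^ 2)) _ t := h1.add h2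
  rw [h12.deriv]
  field_simp
  ring

lemma pxuv (x t : ℝ) :
    px (fun a b => (1 + 2 * (a - b) / (3 * b)) * (-2 * α / (3 * b) + (a - b) ^ 2 / (9 * b ^ 2))) x t
      = 2 / (3 * t) * (-2 * α / (3 * t) + (x - t) ^ 2 / (9 * t ^ 2))
        + (1 + 2 * (x - t) / (3 * t)) * (2 * (x - t) / (9 * t ^ 2)) :=
  ((hu t x).mul (hv α t x)).deriv
end aux

/-- Explicit polynomial-type solution from the generator `V₃ + cV₄`
(Section 4(VI)): `u = 1 + 2(x−t)/(3t)`, `v = −2α/(3t) + (x−t)²/(9t²)`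
solves the WBK system for `t ≠ 0`. -/
theorem wbk_V3_plus_cV4_solution (α τ : ℝ) :
    ∀ x t : ℝ, t ≠ 0 →
      wbk1 α (fun a b => 1 + 2 * (a - b) / (3 * b))
        (fun a b => -2 * α / (3 * b) + (a - b) ^ 2 / (9 * b ^ 2)) x t = 0 ∧
      wbk2 α τ (fun a b => 1 + 2 * (a - b) / (3 * b))
        (fun a b => -2 * α / (3 * b) + (a - b) ^ 2 / (9 * b ^ 2)) x t = 0 := by
  intro x t ht
  constructor
  · show pt _ x t + _ * px _ x t + px _ x t + α * px (px _) x t = 0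
    rw [ptu x t ht, pxu, pxv, pxxu]
    field_simp
    ring
  · show pt _ x t + px _ x t + τ * px (px (px _)) x t - α * px (px _) x t = 0
    rw [ptv α x t ht, pxuv, pxxxu, pxxv]
    field_simp
    ring
end

section
/- Let α, τ, c ∈ ℝ and let F, G : ℝ → ℝ be smooth functions satisfying, for every ξ ∈ ℝ, the traveling-wave system −cF′ + FF′ + G′ + αF″ = 0 and −cG′ + FG′ + GF′ + τF‴ − αG″ = 0. Then there exist constants Γ₁, Γ₂ ∈ ℝ such that for every ξ ∈ ℝ: G(ξ) = c·F(ξ) − ½·F(ξ)² − α·F′(ξ) + Γ₁ and (τ + α²)·F″(ξ) + (−c² + Γ₁)·F(ξ) + (3c/2)·F(ξ)² − ½·F(ξ)³ = Γ₂. -/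
/-- Reduction of the traveling-wave WBK system to a single second-order ODE
`(τ+α²)F″ + (−c² + Γ₁)F + (3c/2)F² − ½F³ = Γ₂` together with
`G = cF − ½F² − αF′ + Γ₁` (end of Section 4). -/
theorem wbk_traveling_wave_second_order_reduction (α τ c : ℝ) (F G : ℝ → ℝ)
    (hF : ContDiff ℝ (⊤ : ℕ∞) F) (hG : ContDiff ℝ (⊤ : ℕ∞) G)
    (h1 : ∀ ξ : ℝ,
      -c * deriv F ξ + F ξ * deriv F ξ + deriv G ξ + α * deriv (deriv F) ξ = 0)
    (h2 : ∀ ξ : ℝ,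
      -c * deriv G ξ + F ξ * deriv G ξ + G ξ * deriv F ξ
        + τ * deriv (deriv (deriv F)) ξ - α * deriv (deriv G) ξ = 0) :
    ∃ Γ₁ Γ₂ : ℝ, ∀ ξ : ℝ,
      G ξ = c * F ξ - (1 / 2) * (F ξ) ^ 2 - α * deriv F ξ + Γ₁ ∧
      (τ + α ^ 2) * deriv (deriv F) ξ + (-c ^ 2 + Γ₁) * F ξ
        + (3 * c / 2) * (F ξ) ^ 2 - (1 / 2) * (F ξ) ^ 3 = Γ₂ := by
  have hF' : ContDiff ℝ (⊤ : ℕ∞) F := hF.of_le (by simp)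
  have hF1 : ContDiff ℝ (⊤ : ℕ∞) (deriv F) := (contDiff_infty_iff_deriv.mp hF').2
  have hF2 : ContDiff ℝ (⊤ : ℕ∞) (deriv (deriv F)) := (contDiff_infty_iff_deriv.mp hF1).2
  have dF : ∀ ξ : ℝ, HasDerivAt F (deriv F ξ) ξ :=
    fun ξ => (hF.differentiable (by simp) ξ).hasDerivAt
  have dF1 : ∀ ξ : ℝ, HasDerivAt (deriv F) (deriv (deriv F) ξ) ξ :=
    fun ξ => (hF1.differentiable (by norm_num) ξ).hasDerivAt
  have dF2 : ∀ ξ : ℝ, HasDerivAt (deriv (deriv F)) (deriv (deriv (deriv F)) ξ) ξ :=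
    fun ξ => (hF2.differentiable (by norm_num) ξ).hasDerivAt
  have dG : ∀ ξ : ℝ, HasDerivAt G (deriv G ξ) ξ :=
    fun ξ => (hG.differentiable (by simp) ξ).hasDerivAt
  -- the first integral
  set H : ℝ → ℝ := fun ξ => G ξ - c * F ξ + (1 / 2) * (F ξ) ^ 2 + α * deriv F ξ with hH
  have dH : ∀ ξ : ℝ, HasDerivAt H
      (deriv G ξ - c * deriv F ξ + (1 / 2) * (2 * F ξ ^ 1 * deriv F ξ)
        + α * deriv (deriv F) ξ) ξ := fun ξ => by
    exact (((dG ξ).sub ((dF ξ).const_mul c)).add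
      (((dF ξ).pow 2).const_mul (1 / 2))).add ((dF1 ξ).const_mul α)
  have hHder : ∀ ξ : ℝ, deriv H ξ = 0 := by
    intro ξ
    rw [(dH ξ).deriv]
    have := h1 ξ
    ring_nf
    ring_nf at this
    linarith
  have hHdiff : Differentiable ℝ H := fun ξ => (dH ξ).differentiableAt
  have hHconst : ∀ ξ : ℝ, H ξ = H 0 :=
    fun ξ => is_const_of_deriv_eq_zero hHdiff hHder ξ 0
  set Γ₁ : ℝ := H 0 with hΓ₁
  have hGval : ∀ ξ : ℝ, G ξ = c * F ξ - (1 / 2) * (F ξ) ^ 2 - α * deriv F ξ + Γ₁ := by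
    intro ξ
    have := hHconst ξ
    simp only [hH] at this
    linarith
  -- first derivative of G
  have hG1 : deriv G = fun ξ => c * deriv F ξ - F ξ * deriv F ξ - α * deriv (deriv F) ξ := by
    funext ξ
    have := h1 ξ
    linarith
  -- second derivative of G
  have hG2 : ∀ ξ : ℝ, deriv (deriv G) ξ
      = c * deriv (deriv F) ξ - (deriv F ξ * deriv F ξ + F ξ * deriv (deriv F) ξ)
        - α * deriv (deriv (deriv F)) ξ := by
    intro ξ
    rw [hG1]
    exact ((((dF1 ξ).const_mul c).sub ((dF ξ).mul (dF1 ξ))).sub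
      ((dF2 ξ).const_mul α)).deriv
  -- the second integral
  set K : ℝ → ℝ := fun ξ => (τ + α ^ 2) * deriv (deriv F) ξ + (-c ^ 2 + Γ₁) * F ξ
      + (3 * c / 2) * (F ξ) ^ 2 - (1 / 2) * (F ξ) ^ 3 with hK
  have dK : ∀ ξ : ℝ, HasDerivAt K
      ((τ + α ^ 2) * deriv (deriv (deriv F)) ξ + (-c ^ 2 + Γ₁) * deriv F ξ
        + (3 * c / 2) * (2 * F ξ ^ 1 * deriv F ξ)
        - (1 / 2) * (3 * F ξ ^ 2 * deriv F ξ)) ξ := fun ξ => by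
    exact ((((dF2 ξ).const_mul (τ + α ^ 2)).add ((dF ξ).const_mul (-c ^ 2 + Γ₁))).add
      (((dF ξ).pow 2).const_mul (3 * c / 2))).sub (((dF ξ).pow 3).const_mul (1 / 2))
  have hKder : ∀ ξ : ℝ, deriv K ξ = 0 := by
    intro ξ
    rw [(dK ξ).deriv]
    have h2ξ := h2 ξ
    rw [hGval ξ, hG2 ξ] at h2ξ
    have hg1 : deriv G ξ = c * deriv F ξ - F ξ * deriv F ξ - α * deriv (deriv F) ξ := by
      rw [hG1]
    rw [hg1] at h2ξ
    linear_combination h2ξ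
  have hKdiff : Differentiable ℝ K := fun ξ => (dK ξ).differentiableAt
  have hKconst : ∀ ξ : ℝ, K ξ = K 0 :=
    fun ξ => is_const_of_deriv_eq_zero hKdiff hKder ξ 0
  refine ⟨Γ₁, K 0, fun ξ => ⟨hGval ξ, ?_⟩⟩
  have := hKconst ξ
  simpa [hK] using this
end

section
/- Let α, τ ∈ ℝ and let F : ℝ → ℝ be a smooth function satisfying (τ + α²)·F″(ξ) − ½·F(ξ)³ + ξ·F(ξ) = 0 for all ξ ∈ ℝ. Define G : ℝ → ℝ by G(ξ) = ξ + α·F′(ξ) − ½·F(ξ)². Then the functions u(x,t) = t + F(t²/2 − x) and v(x,t) = G(t²/2 − x) satisfy the Whitham–Broer–Kaup system ∂ₜu + u∂ₓu + ∂ₓv + α∂ₓₓu = 0 and ∂ₜv + ∂ₓ(uv) + τ∂ₓₓₓu − α∂ₓₓv = 0 at every point (x,t) ∈ ℝ². -/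
lemma hasDerivAt_comp_sub (f : ℝ → ℝ) (hf : Differentiable ℝ f) (c x : ℝ) :
    HasDerivAt (fun y => f (c - y)) (-deriv f (c - x)) x := by
  have h := ((hf (c - x)).hasDerivAt).comp x ((hasDerivAt_id x).const_sub c)
  simp [Function.comp] at h
  exact h

lemma hasDerivAt_comp_time (f : ℝ → ℝ) (hf : Differentiable ℝ f) (x t : ℝ) :
    HasDerivAt (fun s => f (s ^ 2 / 2 - x)) (deriv f (t ^ 2 / 2 - x) * t) t := by
  have ht : HasDerivAt (fun s : ℝ => s ^ 2 / 2 - x) t t := by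
    have := ((hasDerivAt_pow 2 t).div_const 2).sub_const x
    simpa using this
  have h := ((hf (t ^ 2 / 2 - x)).hasDerivAt).comp t ht
  exact h


/-- Section 4(V) with `c = 1`: from a solution of
`(τ+α²)F″ − F³/2 + ξF = 0` and `G = ξ + αF′ − F²/2`, the functions
`u(x,t) = t + F(t²/2 − x)`, `v(x,t) = G(t²/2 − x)` solve the WBK system. -/
theorem wbk_V1_plus_V3_solution (α τ : ℝ) (F G : ℝ → ℝ)
    (hF : ContDiff ℝ (⊤ : ℕ∞) F)
    (hODE : ∀ ξ : ℝ, (τ + α ^ 2) * deriv (deriv F) ξ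
      - (1 / 2) * (F ξ) ^ 3 + ξ * F ξ = 0)
    (hG : ∀ ξ : ℝ, G ξ = ξ + α * deriv F ξ - (1 / 2) * (F ξ) ^ 2) :
    WBK α τ (fun x t => t + F (t ^ 2 / 2 - x)) (fun x t => G (t ^ 2 / 2 - x)) := by
  set F1 : ℝ → ℝ := deriv F with hF1def
  set F2 : ℝ → ℝ := deriv F1 with hF2def
  set F3 : ℝ → ℝ := deriv F2 with hF3def
  have hFi : ContDiff ℝ ((⊤ : ℕ∞) : WithTop ℕ∞) F := hF.of_le (by simp)
  have hFd : Differentiable ℝ F := hFi.differentiable (by norm_num)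
  have hF1c : ContDiff ℝ ((⊤ : ℕ∞) : WithTop ℕ∞) F1 := (contDiff_infty_iff_deriv.mp hFi).2
  have hF1d : Differentiable ℝ F1 := hF1c.differentiable (by norm_num)
  have hF2c : ContDiff ℝ ((⊤ : ℕ∞) : WithTop ℕ∞) F2 := (contDiff_infty_iff_deriv.mp hF1c).2
  have hF2d : Differentiable ℝ F2 := hF2c.differentiable (by norm_num)
  -- G and its derivatives
  set G1 : ℝ → ℝ := fun s => 1 + α * F2 s - F s * F1 s with hG1def
  set G2 : ℝ → ℝ := fun s => α * F3 s - (F1 s * F1 s + F s * F2 s) with hG2def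
  have hGfun : G = fun s => s + α * F1 s - (1 / 2) * F s ^ 2 := funext hG
  have hGder : ∀ s, HasDerivAt G (G1 s) s := by
    intro s
    rw [hGfun]
    have h1 : HasDerivAt (fun s => s + α * F1 s - (1 / 2) * F s ^ 2)
        (1 + α * F2 s - (1 / 2) * ((2 : ℕ) * F s ^ (2 - 1) * F1 s)) s :=
      ((hasDerivAt_id s).add (((hF1d s).hasDerivAt).const_mul α)).sub
        ((((hFd s).hasDerivAt).pow 2).const_mul (1 / 2))
    convert h1 using 1
    simp [hG1def]; ring
  have hGdiff : Differentiable ℝ G := fun s => (hGder s).differentiableAt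
  have hderivG : deriv G = G1 := funext fun s => (hGder s).deriv
  have hG1der : ∀ s, HasDerivAt G1 (G2 s) s := by
    intro s
    have h1 : HasDerivAt (fun s => 1 + α * F2 s - F s * F1 s)
        (α * F3 s - (F1 s * F1 s + F s * F2 s)) s := by
      have := ((((hF2d s).hasDerivAt).const_mul α).const_add 1).sub
        (((hFd s).hasDerivAt).mul ((hF1d s).hasDerivAt))
      exact this
    exact h1
  have hG1diff : Differentiable ℝ G1 := fun s => (hG1der s).differentiableAt
  have hderivG1 : deriv G1 = G2 := funext fun s => (hG1der s).deriv
  -- differentiated ODE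
  have hODE' : ∀ s : ℝ, (τ + α ^ 2) * F3 s
      - (3 / 2) * F s ^ 2 * F1 s + (F s + s * F1 s) = 0 := by
    intro s
    have hfun : (fun s => (τ + α ^ 2) * F2 s - (1 / 2) * F s ^ 3 + s * F s)
        = fun _ => (0 : ℝ) := funext hODE
    have hd : HasDerivAt (fun s => (τ + α ^ 2) * F2 s - (1 / 2) * F s ^ 3 + s * F s)
        ((τ + α ^ 2) * F3 s - (1 / 2) * ((3 : ℕ) * F s ^ (3 - 1) * F1 s)
          + (1 * F s + s * F1 s)) s :=
      ((((hF2d s).hasDerivAt).const_mul (τ + α ^ 2)).sub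
        ((((hFd s).hasDerivAt).pow 3).const_mul (1 / 2))).add
        ((hasDerivAt_id s).mul ((hFd s).hasDerivAt))
    rw [hfun] at hd
    have h0 : (τ + α ^ 2) * F3 s - (1 / 2) * ((3 : ℕ) * F s ^ (3 - 1) * F1 s)
        + (1 * F s + s * F1 s) = 0 := hd.unique (hasDerivAt_const s 0)
    have := h0
    push_cast at this ⊢
    linarith [this]
  -- spatial derivatives
  set u : ℝ → ℝ → ℝ := fun x t => t + F (t ^ 2 / 2 - x) with hu
  set v : ℝ → ℝ → ℝ := fun x t => G (t ^ 2 / 2 - x) with hv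
  have hpxu : px u = fun x t => -F1 (t ^ 2 / 2 - x) := by
    funext a b
    exact ((hasDerivAt_comp_sub F hFd (b ^ 2 / 2) a).const_add b).deriv
  have hpx2u : px (px u) = fun x t => F2 (t ^ 2 / 2 - x) := by
    funext a b
    rw [hpxu]
    simp only [px]
    have := ((hasDerivAt_comp_sub F1 hF1d (b ^ 2 / 2) a).neg).deriv
    simpa using this
  have hpx3u : px (px (px u)) = fun x t => -F3 (t ^ 2 / 2 - x) := by
    funext a b
    rw [hpx2u]
    exact (hasDerivAt_comp_sub F2 hF2d (b ^ 2 / 2) a).deriv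
  have hpxv : px v = fun x t => -G1 (t ^ 2 / 2 - x) := by
    funext a b
    have := (hasDerivAt_comp_sub G hGdiff (b ^ 2 / 2) a).deriv
    rw [hderivG] at this
    exact this
  have hpx2v : px (px v) = fun x t => G2 (t ^ 2 / 2 - x) := by
    funext a b
    rw [hpxv]
    simp only [px]
    have := ((hasDerivAt_comp_sub G1 hG1diff (b ^ 2 / 2) a).neg).deriv
    rw [hderivG1] at this
    simpa using this
  intro x t
  set ξ : ℝ := t ^ 2 / 2 - x with hξ
  -- time derivatives
  have hptu : pt u x t = 1 + F1 ξ * t := by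
    have := ((hasDerivAt_comp_time F hFd x t).const_add 0).deriv
    simp only [pt]
    have h : HasDerivAt (fun s => s + F (s ^ 2 / 2 - x)) (1 + F1 ξ * t) t :=
      (hasDerivAt_id t).add (hasDerivAt_comp_time F hFd x t)
    exact h.deriv
  have hptv : pt v x t = G1 ξ * t := by
    have h := (hasDerivAt_comp_time G hGdiff x t).deriv
    rw [hderivG] at h
    exact h
  -- product derivative
  have hprod : px (fun a b => u a b * v a b) x t
      = -F1 ξ * G ξ + (t + F ξ) * (-G1 ξ) := by
    have h1 : HasDerivAt (fun y => t + F (t ^ 2 / 2 - y)) (-F1 ξ) x :=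
      (hasDerivAt_comp_sub F hFd (t ^ 2 / 2) x).const_add t
    have h2 : HasDerivAt (fun y => G (t ^ 2 / 2 - y)) (-G1 ξ) x := by
      have := hasDerivAt_comp_sub G hGdiff (t ^ 2 / 2) x
      rw [hderivG] at this
      exact this
    exact (h1.mul h2).deriv
  constructor
  · show wbk1 α u v x t = 0
    simp only [wbk1]
    rw [hpx2u, hpxu, hpxv, hptu]
    show 1 + F1 ξ * t + u x t * -F1 ξ + -G1 ξ + α * F2 ξ = 0
    show 1 + F1 ξ * t + (t + F ξ) * -F1 ξ + -G1 ξ + α * F2 ξ = 0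
    simp only [hG1def]
    ring
  · show wbk2 α τ u v x t = 0
    simp only [wbk2]
    rw [hpx3u, hpx2v, hprod, hptv]
    show G1 ξ * t + (-F1 ξ * G ξ + (t + F ξ) * -G1 ξ) + τ * -F3 ξ - α * G2 ξ = 0
    rw [hG ξ]
    simp only [hG1def, hG2def, ← hF1def]
    have := hODE' ξ
    nlinarith [this, sq_nonneg (F ξ)]
end

section
/- Let ξ₁, ξ₂, η₁, η₂ : ℝ × ℝ × ℝ × (0, ∞) → ℝ be smooth functions of (x, t, u, v) satisfying, at every point of their domain, the determining system: ∂ξ₂/∂x = 0, ∂ξ₁/∂x = −η₂/(2v), ∂η₁/∂x = 0, ∂η₂/∂x = 0, ∂ξ₂/∂t = −η₂/v, ∂ξ₁/∂t = (2η₁v − uη₂)/(2v), ∂η₁/∂t = 0, ∂η₂/∂t = 0, ∂ξ₂/∂u = 0, ∂ξ₁/∂u = 0, ∂η₁/∂u = η₂/(2v), ∂η₂/∂u = 0, ∂ξ₂/∂v = 0, ∂ξ₁/∂v = 0, ∂η₁/∂v = 0, ∂η₂/∂v = η₂/v. Then there exist constants C₁, C₂, C₃, C₄ ∈ ℝ such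 that for all (x, t, u, v) in the domain: η₁ = ½C₁u + C₃, η₂ = C₁v, ξ₁ = C₃t − ½C₁x + C₄, and ξ₂ = −C₁t + C₂. -/
/-- Partial derivative in the `x` variable for a function of `(x, t, u, v)`. -/
noncomputable def Dx4 (f : ℝ → ℝ → ℝ → ℝ → ℝ) : ℝ → ℝ → ℝ → ℝ → ℝ :=
  fun x t u v => deriv (fun y => f y t u v) x

/-- Partial derivative in the `t` variable for a function of `(x, t, u, v)`. -/
noncomputable def Dt4 (f : ℝ → ℝ → ℝ → ℝ → ℝ) : ℝ → ℝ → ℝ → ℝ → ℝ :=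
  fun x t u v => deriv (fun s => f x s u v) t

/-- Partial derivative in the `u` variable for a function of `(x, t, u, v)`. -/
noncomputable def Du4 (f : ℝ → ℝ → ℝ → ℝ → ℝ) : ℝ → ℝ → ℝ → ℝ → ℝ :=
  fun x t u v => deriv (fun w => f x t w v) u

/-- Partial derivative in the `v` variable for a function of `(x, t, u, v)`. -/
noncomputable def Dv4 (f : ℝ → ℝ → ℝ → ℝ → ℝ) : ℝ → ℝ → ℝ → ℝ → ℝ :=
  fun x t u v => deriv (fun w => f x t u w) v

/-- Smoothness of a function of four real variables `(x, t, u, v)`. -/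
def Smooth4 (f : ℝ → ℝ → ℝ → ℝ → ℝ) : Prop :=
  ContDiff ℝ (⊤ : ℕ∞) (fun p : ℝ × ℝ × ℝ × ℝ => f p.1 p.2.1 p.2.2.1 p.2.2.2)

/-- The vector field `V₁ = ∂_t`. -/
noncomputable def V1 (f : ℝ → ℝ → ℝ → ℝ → ℝ) : ℝ → ℝ → ℝ → ℝ → ℝ := Dt4 f

/-- The vector field `V₂ = ∂_x`. -/
noncomputable def V2 (f : ℝ → ℝ → ℝ → ℝ → ℝ) : ℝ → ℝ → ℝ → ℝ → ℝ := Dx4 f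

/-- The vector field `V₃ = t ∂_x + ∂_u`. -/
noncomputable def V3 (f : ℝ → ℝ → ℝ → ℝ → ℝ) : ℝ → ℝ → ℝ → ℝ → ℝ :=
  fun x t u v => t * Dx4 f x t u v + Du4 f x t u v

/-- The vector field `V₄ = x ∂_x + 2t ∂_t − u ∂_u − 2v ∂_v`. -/
noncomputable def V4 (f : ℝ → ℝ → ℝ → ℝ → ℝ) : ℝ → ℝ → ℝ → ℝ → ℝ :=
  fun x t u v => x * Dx4 f x t u v + 2 * t * Dt4 f x t u v
    - u * Du4 f x t u v - 2 * v * Dv4 f x t u v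

/-- Smoothness of a function of `(x, t, u, v)` on the domain `v > 0`. -/
def Smooth4On (f : ℝ → ℝ → ℝ → ℝ → ℝ) : Prop :=
  ContDiffOn ℝ (⊤ : ℕ∞) (fun p : ℝ × ℝ × ℝ × ℝ => f p.1 p.2.1 p.2.2.1 p.2.2.2)
    {p : ℝ × ℝ × ℝ × ℝ | 0 < p.2.2.2}

section WbkHelpers

private lemma wbk_S4_open : IsOpen {p : ℝ × ℝ × ℝ × ℝ | 0 < p.2.2.2} :=
  isOpen_lt continuous_const (by fun_prop)

private lemma wbk_slice_diff_x (f : ℝ → ℝ → ℝ → ℝ → ℝ) (hf : Smooth4On f)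
    (t u v : ℝ) (hv : 0 < v) : Differentiable ℝ (fun y => f y t u v) := by
  intro y
  have hF := (hf.contDiffAt (wbk_S4_open.mem_nhds
    (show ((y,t,u,v) : ℝ×ℝ×ℝ×ℝ) ∈ {p : ℝ × ℝ × ℝ × ℝ | 0 < p.2.2.2} from hv))).differentiableAt (by simp)
  exact hF.comp y (by fun_prop : DifferentiableAt ℝ (fun y : ℝ => ((y,t,u,v) : ℝ×ℝ×ℝ×ℝ)) y)

private lemma wbk_slice_diff_t (f : ℝ → ℝ → ℝ → ℝ → ℝ) (hf : Smooth4On f)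
    (x u v : ℝ) (hv : 0 < v) : Differentiable ℝ (fun s => f x s u v) := by
  intro s
  have hF := (hf.contDiffAt (wbk_S4_open.mem_nhds
    (show ((x,s,u,v) : ℝ×ℝ×ℝ×ℝ) ∈ {p : ℝ × ℝ × ℝ × ℝ | 0 < p.2.2.2} from hv))).differentiableAt (by simp)
  exact hF.comp s (by fun_prop : DifferentiableAt ℝ (fun s : ℝ => ((x,s,u,v) : ℝ×ℝ×ℝ×ℝ)) s)

private lemma wbk_slice_diff_u (f : ℝ → ℝ → ℝ → ℝ → ℝ) (hf : Smooth4On f)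
    (x t v : ℝ) (hv : 0 < v) : Differentiable ℝ (fun w => f x t w v) := by
  intro w
  have hF := (hf.contDiffAt (wbk_S4_open.mem_nhds
    (show ((x,t,w,v) : ℝ×ℝ×ℝ×ℝ) ∈ {p : ℝ × ℝ × ℝ × ℝ | 0 < p.2.2.2} from hv))).differentiableAt (by simp)
  exact hF.comp w (by fun_prop : DifferentiableAt ℝ (fun w : ℝ => ((x,t,w,v) : ℝ×ℝ×ℝ×ℝ)) w)

private lemma wbk_slice_diff_v (f : ℝ → ℝ → ℝ → ℝ → ℝ) (hf : Smooth4On f)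
    (x t u : ℝ) : ∀ v ∈ Set.Ioi (0:ℝ), DifferentiableAt ℝ (fun w => f x t u w) v := by
  intro v hv
  have hF := (hf.contDiffAt (wbk_S4_open.mem_nhds
    (show ((x,t,u,v) : ℝ×ℝ×ℝ×ℝ) ∈ {p : ℝ × ℝ × ℝ × ℝ | 0 < p.2.2.2} from hv))).differentiableAt (by simp)
  have hc := hF.comp v (by fun_prop : DifferentiableAt ℝ (fun w : ℝ => ((x,t,u,w) : ℝ×ℝ×ℝ×ℝ)) v)
  exact hc

private lemma wbk_const_on_Ioi (g : ℝ → ℝ) (hg : ∀ v ∈ Set.Ioi (0:ℝ), DifferentiableAt ℝ g v)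
    (hg' : ∀ v ∈ Set.Ioi (0:ℝ), deriv g v = 0) : ∀ v ∈ Set.Ioi (0:ℝ), g v = g 1 := by
  have hl := (convex_Ioi (0:ℝ)).lipschitzOnWith_of_nnnorm_deriv_le (C := 0) hg
    (fun x hx => by simp [hg' x hx])
  intro v hv
  have := hl hv (Set.mem_Ioi.mpr one_pos)
  simpa [edist_eq_zero] using this

private lemma wbk_affine_of_deriv_const (f : ℝ → ℝ) (hf : Differentiable ℝ f) (c : ℝ)
    (hc : ∀ y, deriv f y = c) : ∀ y, f y = c * y + f 0 := by
  intro y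
  have hg : Differentiable ℝ (fun y => f y - c * y) := hf.sub (by fun_prop)
  have hg' : ∀ y, deriv (fun y => f y - c * y) y = 0 := by
    intro y
    rw [deriv_fun_sub (hf y) (by fun_prop), hc y, deriv_const_mul_field']
    simp
  have := is_const_of_deriv_eq_zero hg hg' y 0
  simp at this
  linarith

private lemma wbk_ode_lin (g : ℝ → ℝ) (hg : ∀ v ∈ Set.Ioi (0:ℝ), DifferentiableAt ℝ g v)
    (hg' : ∀ v ∈ Set.Ioi (0:ℝ), deriv g v = g v / v) :
    ∀ v ∈ Set.Ioi (0:ℝ), g v = g 1 * v := by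
  have hh : ∀ v ∈ Set.Ioi (0:ℝ), DifferentiableAt ℝ (fun w => g w / w) v :=
    fun v hv => (hg v hv).div differentiableAt_id (ne_of_gt hv)
  have hh' : ∀ v ∈ Set.Ioi (0:ℝ), deriv (fun w => g w / w) v = 0 := by
    intro v hv
    have hd := deriv_fun_div (c := g) (d := fun w : ℝ => w) (hg v hv) differentiableAt_fun_id (ne_of_gt hv)
    simp only [deriv_id''] at hd
    rw [hd, hg' v hv]
    have hv0 : v ≠ 0 := ne_of_gt hv
    field_simp
    ring
  intro v hv
  have := wbk_const_on_Ioi _ hh hh' v hv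
  simp only [div_one] at this
  have hv0 : v ≠ 0 := ne_of_gt hv
  field_simp at this
  linarith [this]

private lemma wbk_elimx (f : ℝ → ℝ → ℝ → ℝ → ℝ) (hf : Smooth4On f) (x t u v : ℝ) {c : ℝ}
    (hv : 0 < v) (hd : ∀ y, Dx4 f y t u v = c) : f x t u v = c * x + f 0 t u v :=
  wbk_affine_of_deriv_const _ (wbk_slice_diff_x f hf t u v hv) c hd x

private lemma wbk_elimt (f : ℝ → ℝ → ℝ → ℝ → ℝ) (hf : Smooth4On f) (x t u v : ℝ) {c : ℝ}
    (hv : 0 < v) (hd : ∀ s, Dt4 f x s u v = c) : f x t u v = c * t + f x 0 u v :=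
  wbk_affine_of_deriv_const _ (wbk_slice_diff_t f hf x u v hv) c hd t

private lemma wbk_elimu (f : ℝ → ℝ → ℝ → ℝ → ℝ) (hf : Smooth4On f) (x t u v : ℝ) {c : ℝ}
    (hv : 0 < v) (hd : ∀ w, Du4 f x t w v = c) : f x t u v = c * u + f x t 0 v :=
  wbk_affine_of_deriv_const _ (wbk_slice_diff_u f hf x t v hv) c hd u

private lemma wbk_elimv (f : ℝ → ℝ → ℝ → ℝ → ℝ) (hf : Smooth4On f) (x t u v : ℝ)
    (hv : 0 < v) (hd : ∀ w, 0 < w → Dv4 f x t u w = 0) : f x t u v = f x t u 1 :=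
  wbk_const_on_Ioi _ (wbk_slice_diff_v f hf x t u) (fun w hw => hd w hw) v hv

end WbkHelpers

/-- Solution of the determining system (9) of the Lie symmetry analysis of
the Whitham–Broer–Kaup system on the connected domain `v > 0`, yielding the
four-dimensional symmetry algebra of Theorem 1. -/
theorem wbk_determining_system_solution
    (ξ₁ ξ₂ η₁ η₂ : ℝ → ℝ → ℝ → ℝ → ℝ)
    (hξ₁ : Smooth4On ξ₁) (hξ₂ : Smooth4On ξ₂)
    (hη₁ : Smooth4On η₁) (hη₂ : Smooth4On η₂)
    (h : ∀ x t u v : ℝ, 0 < v →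
      Dx4 ξ₂ x t u v = 0 ∧
      Dx4 ξ₁ x t u v = -(η₂ x t u v) / (2 * v) ∧
      Dx4 η₁ x t u v = 0 ∧
      Dx4 η₂ x t u v = 0 ∧
      Dt4 ξ₂ x t u v = -(η₂ x t u v) / v ∧
      Dt4 ξ₁ x t u v = (2 * η₁ x t u v * v - u * η₂ x t u v) / (2 * v) ∧
      Dt4 η₁ x t u v = 0 ∧
      Dt4 η₂ x t u v = 0 ∧
      Du4 ξ₂ x t u v = 0 ∧
      Du4 ξ₁ x t u v = 0 ∧
      Du4 η₁ x t u v = η₂ x t u v / (2 * v) ∧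
      Du4 η₂ x t u v = 0 ∧
      Dv4 ξ₂ x t u v = 0 ∧
      Dv4 ξ₁ x t u v = 0 ∧
      Dv4 η₁ x t u v = 0 ∧
      Dv4 η₂ x t u v = η₂ x t u v / v) :
    ∃ C₁ C₂ C₃ C₄ : ℝ, ∀ x t u v : ℝ, 0 < v →
      η₁ x t u v = (1 / 2) * C₁ * u + C₃ ∧
      η₂ x t u v = C₁ * v ∧
      ξ₁ x t u v = C₃ * t - (1 / 2) * C₁ * x + C₄ ∧
      ξ₂ x t u v = -C₁ * t + C₂ := by
  set C₁ := η₂ 0 0 0 1 with hC₁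
  set C₂ := ξ₂ 0 0 0 1 with hC₂
  set C₃ := η₁ 0 0 0 1 with hC₃
  set C₄ := ξ₁ 0 0 0 1 with hC₄
  -- Step 1: η₂ = C₁ * v
  have hE2 : ∀ x t u v : ℝ, 0 < v → η₂ x t u v = C₁ * v := by
    intro x t u v hv
    have e1 := wbk_elimx η₂ hη₂ x t u v hv (fun y => (h y t u v hv).2.2.2.1)
    have e2 := wbk_elimt η₂ hη₂ 0 t u v hv (fun s => (h 0 s u v hv).2.2.2.2.2.2.2.1)
    have e3 := wbk_elimu η₂ hη₂ 0 0 u v hv (fun w => (h 0 0 w v hv).2.2.2.2.2.2.2.2.2.2.2.1)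
    have e4 := wbk_ode_lin (fun w => η₂ 0 0 0 w) (wbk_slice_diff_v η₂ hη₂ 0 0 0)
      (fun w hw => (h 0 0 0 w hw).2.2.2.2.2.2.2.2.2.2.2.2.2.2.2) v hv
    rw [e1, e2, e3, e4]
    ring
  -- Step 2: η₁ = (1/2) C₁ u + C₃
  have hE1 : ∀ x t u v : ℝ, 0 < v → η₁ x t u v = (1/2) * C₁ * u + C₃ := by
    intro x t u v hv
    have e1 := wbk_elimx η₁ hη₁ x t u v hv (fun y => (h y t u v hv).2.2.1)
    have e2 := wbk_elimt η₁ hη₁ 0 t u v hv (fun s => (h 0 s u v hv).2.2.2.2.2.2.1)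
    have e3 := wbk_elimu η₁ hη₁ 0 0 u v (c := (1/2) * C₁) hv (fun w => by
      have := (h 0 0 w v hv).2.2.2.2.2.2.2.2.2.2.1
      rw [this, hE2 0 0 w v hv]
      have hv0 : v ≠ 0 := ne_of_gt hv
      field_simp)
    have e4 := wbk_elimv η₁ hη₁ 0 0 0 v hv (fun w hw => (h 0 0 0 w hw).2.2.2.2.2.2.2.2.2.2.2.2.2.2.1)
    rw [e1, e2, e3, e4]
    ring
  -- Step 3: ξ₂ = -C₁ t + C₂
  have hX2 : ∀ x t u v : ℝ, 0 < v → ξ₂ x t u v = -C₁ * t + C₂ := by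
    intro x t u v hv
    have e1 := wbk_elimx ξ₂ hξ₂ x t u v hv (fun y => (h y t u v hv).1)
    have e2 := wbk_elimt ξ₂ hξ₂ 0 t u v (c := -C₁) hv (fun s => by
      have := (h 0 s u v hv).2.2.2.2.1
      rw [this, hE2 0 s u v hv]
      have hv0 : v ≠ 0 := ne_of_gt hv
      field_simp)
    have e3 := wbk_elimu ξ₂ hξ₂ 0 0 u v hv (fun w => (h 0 0 w v hv).2.2.2.2.2.2.2.2.1)
    have e4 := wbk_elimv ξ₂ hξ₂ 0 0 0 v hv (fun w hw => (h 0 0 0 w hw).2.2.2.2.2.2.2.2.2.2.2.2.1)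
    rw [e1, e2, e3, e4]
    ring
  -- Step 4: ξ₁ = C₃ t - (1/2) C₁ x + C₄
  have hX1 : ∀ x t u v : ℝ, 0 < v → ξ₁ x t u v = C₃ * t - (1/2) * C₁ * x + C₄ := by
    intro x t u v hv
    have e1 := wbk_elimx ξ₁ hξ₁ x t u v (c := -((1/2) * C₁)) hv (fun y => by
      have := (h y t u v hv).2.1
      rw [this, hE2 y t u v hv]
      have hv0 : v ≠ 0 := ne_of_gt hv
      field_simp)
    have e2 := wbk_elimt ξ₁ hξ₁ 0 t u v (c := C₃) hv (fun s => by
      have := (h 0 s u v hv).2.2.2.2.2.1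
      rw [this, hE2 0 s u v hv, hE1 0 s u v hv]
      have hv0 : v ≠ 0 := ne_of_gt hv
      field_simp
      ring)
    have e3 := wbk_elimu ξ₁ hξ₁ 0 0 u v hv (fun w => (h 0 0 w v hv).2.2.2.2.2.2.2.2.2.1)
    have e4 := wbk_elimv ξ₁ hξ₁ 0 0 0 v hv (fun w hw => (h 0 0 0 w hw).2.2.2.2.2.2.2.2.2.2.2.2.2.1)
    rw [e1, e2, e3, e4]
    ring
  exact ⟨C₁, C₂, C₃, C₄, fun x t u v hv =>
    ⟨hE1 x t u v hv, hE2 x t u v hv, hX1 x t u v hv, hX2 x t u v hv⟩⟩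
end
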